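/- For any additive category M, there is a canonical equivalence of categories Kom(Kar(M)) ≃ Kar(Kom(M)), where Kom denotes the category of bounded chain complexes and Kar denotes the Karoubi envelope (idempotent completion). -/

import Mathlib

open CategoryTheory CategoryTheory.Limits CategoryTheory.Idempotents

/-- A cochain complex is bounded if its components vanish outside a finite interval. -/
def IsBoundedComplex {M : Type*} [Category M] [HasZeroMorphisms M]
    (K : CochainComplex M ℤ) : Prop :=
  ∃ a b : ℤ, ∀ i : ℤ, i < a ∨ b < i → IsZero (K.X i)

/-!
The standard equivalence `Kar(Kom(M)) ≌ Kom(Kar(M))` sends `(K, e)` to the complex of the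
`(Kᵢ, eᵢ)`. It restricts to an equivalence between `Kom^b(Kar(M))` and the pairs `(K, e)` with
`eᵢ = 0` for all but finitely many `i`, and it remains to see that these are, up to isomorphism,
exactly the pairs with `K` bounded, i.e. the essential image of the fully faithful functor
`Kar(Kom^b(M)) ⥤ Kar(Kom(M))`. Given a bounded complex `L` over `Kar(M)`, replace each zero
component `(X, 0)` of `L` by `(0, 0)` and transport the differentials along these isomorphisms:
the inverse equivalence sends the resulting complex to a pair whose underlying complex is bounded.
-/

universe v v'

namespace HomologicalComplex

variable {C ι : Type*} [Category.{v} C] [HasZeroMorphisms C] {c : ComplexShape ι}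

def transport (K : HomologicalComplex C c) (Y : ι → C) (e : ∀ i, K.X i ≅ Y i) :
    HomologicalComplex C c where
  X := Y
  d i j := (e i).inv ≫ K.d i j ≫ (e j).hom
  shape i j h := by rw [K.shape i j h, zero_comp, comp_zero]
  d_comp_d' i j k _ _ := by simp

def isoTransport (K : HomologicalComplex C c) (Y : ι → C) (e : ∀ i, K.X i ≅ Y i) :
    K ≅ K.transport Y e :=
  Hom.isoOfComponents e fun _ _ _ => by dsimp only [transport]; simp

end HomologicalComplex

namespace CategoryTheory.Idempotents.Karoubi

variable {C : Type*} [Category C]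

lemma isZero_of_isZero_X [Preadditive C] {P : Karoubi C} (h : IsZero P.X) : IsZero P := by
  rw [IsZero.iff_id_eq_zero]
  exact hom_ext _ _ (h.eq_of_src _ _)

variable [HasZeroObject C]

open ZeroObject Classical in
noncomputable def normalizeZero (P : Karoubi C) : Karoubi C :=
  if IsZero P then (toKaroubi C).obj 0 else P

lemma isZero_normalizeZero_X {P : Karoubi C} (h : IsZero P) : IsZero (normalizeZero P).X := by
  rw [normalizeZero, if_pos h]
  exact isZero_zero C

noncomputable def isoNormalizeZero [Preadditive C] (P : Karoubi C) : P ≅ normalizeZero P := by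
  classical
  by_cases h : IsZero P
  · exact h.iso (isZero_of_isZero_X (isZero_normalizeZero_X h))
  · exact eqToIso (by rw [normalizeZero, if_neg h])

end CategoryTheory.Idempotents.Karoubi

namespace CategoryTheory.Functor.FullyFaithful

variable {C D : Type*} [Category.{v} C] [Category.{v'} D] {F : C ⥤ D}

def functorExtension₂Obj (hF : F.FullyFaithful) :
    ((functorExtension₂ C D).obj F).FullyFaithful where
  preimage g := ⟨hF.preimage g.f, hF.map_injective (by
    rw [F.map_comp, F.map_comp]
    erw [hF.map_preimage]
    exact g.comm)⟩
  map_preimage g := Karoubi.hom_ext _ _ (hF.map_preimage g.f)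

end CategoryTheory.Functor.FullyFaithful

instance {M : Type*} [Category M] [HasZeroMorphisms M] :
    ObjectProperty.IsClosedUnderIsomorphisms
      (IsBoundedComplex : ObjectProperty (CochainComplex M ℤ)) where
  of_iso e := fun ⟨a, b, h⟩ =>
    ⟨a, b, fun i hi => (h i hi).of_iso ((HomologicalComplex.eval _ _ i).mapIso e).symm⟩

section

variable (M : Type*) [Category M] [Preadditive M] [HasZeroObject M]

abbrev boundedKaroubiInclusion :
    Karoubi (ObjectProperty.FullSubcategory fun K : CochainComplex M ℤ => IsBoundedComplex K) ⥤
      Karoubi (CochainComplex M ℤ) :=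
  (functorExtension₂ _ _).obj (ObjectProperty.ι _)

instance : (boundedKaroubiInclusion M).Full :=
  (ObjectProperty.fullyFaithfulι _).functorExtension₂Obj.full

instance : (boundedKaroubiInclusion M).Faithful :=
  (ObjectProperty.fullyFaithfulι _).functorExtension₂Obj.faithful

lemma essImage_boundedKaroubiInclusion :
    (boundedKaroubiInclusion M).essImage =
      ObjectProperty.inverseImage IsBoundedComplex
        (karoubiHomologicalComplexEquivalence M (ComplexShape.up ℤ)).functor := by
  set E := karoubiHomologicalComplexEquivalence M (ComplexShape.up ℤ)
  ext P
  constructor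
  · rintro ⟨X, ⟨e⟩⟩
    refine ObjectProperty.prop_of_iso _ e ?_
    obtain ⟨a, b, h⟩ := X.X.2
    exact ⟨a, b, fun i hi => Karoubi.isZero_of_isZero_X (h i hi)⟩
  · rintro ⟨a, b, h⟩
    let L := (E.functor.obj P).transport _ fun i => Karoubi.isoNormalizeZero _
    have hL : IsBoundedComplex (E.inverse.obj L).X :=
      ⟨a, b, fun i hi => Karoubi.isZero_normalizeZero_X (h i hi)⟩
    refine ⟨⟨⟨_, hL⟩, ObjectProperty.homMk (E.inverse.obj L).p,
      ObjectProperty.hom_ext _ (E.inverse.obj L).idem⟩, ⟨?_⟩⟩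
    exact (E.unitIso.app P ≪≫ E.inverse.mapIso (HomologicalComplex.isoTransport _ _ _)).symm

end

/-- For any additive category `M` there is a canonical equivalence
`Kom(Kar(M)) ≃ Kar(Kom(M))` between the category of bounded complexes over the Karoubi
envelope of `M` and the Karoubi envelope of the category of bounded complexes over `M`. -/
theorem kom_kar_equiv_kar_kom
    (M : Type*) [Category M] [Preadditive M] [HasFiniteBiproducts M] :
    Nonempty
      ((ObjectProperty.FullSubcategory fun K : CochainComplex (Karoubi M) ℤ => IsBoundedComplex K) ≌
        Karoubi (ObjectProperty.FullSubcategory fun K : CochainComplex M ℤ => IsBoundedComplex K)) := by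
  exact ⟨((karoubiHomologicalComplexEquivalence M _).congrFullSubcategory rfl).symm.trans <|
    (ObjectProperty.fullSubcategoryCongr (essImage_boundedKaroubiInclusion M).symm).trans
      (boundedKaroubiInclusion M).toEssImage.asEquivalence.symm⟩
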